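/- arXiv:2007.05084 — 3 statements merged into one kernel-verified Lean document; each statement's English description precedes it below -/
import Mathlib

section
/- (Theorem 1, upper bound: adversarial examples imply backdoors.) Let f_W be an L-layer ReLU network with weight matrices W_1, …, W_L, each of operator norm at most 1. Let D and D_edge be finite disjoint sets of inputs in ℝ^{d_0}, and suppose ε-adversarial perturbations exist: for each x ∈ D_edge there is a vector ε(x) with ‖ε(x)‖ ≤ ε. Fix a layer l (1 ≤ l ≤ L), let X_(l) be the matrix whose rows are the (l−1)-th layer activations x^{(l−1)} of all points of D ∪ D_edge under W, assume X_(l) X_(l)ᵀ is invertible, and let ρ_(l) > 0 be the minimum singular value of X_(l) (i.e., ‖X_(l)ᵀ u‖ ≥ ρ_(l) ‖u‖ for all u). Then there exists a matrix W'_l such that the network W' obtained from W by replacing its l-th layer with W'_l satisfies: (i) f_{W'}(x) = f_W(x) for every x ∈ D; (ii) f_{W'}(x) = f_W(x + ε(x)) for every x ∈ D_edge; and (iii) ‖W_l − W'_l‖ ≤ ε √(|D_edge|) / ρ_(l), where ‖·‖ is the operator norm. -/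
/-!
Write `aₚ = x^{(l-1)}(p)` for `p ∈ D ∪ D_edge` and `bₚ = x^{(l-1)}(p + ε(p))`, with `ε(p) = 0`
on `D`. Replacing `W_l` by `W_l - E` sends every `p` to the layer-`l` activation of its target as
soon as `E aₚ = W_l (aₚ - bₚ)`; since the layers above `l` are untouched, the outputs then agree
too. The rows `W_l (aₚ - bₚ)` of the right-hand side `B` vanish on `D` and have norm at most `ε`
on `D_edge`, because the first `l` layers are `1`-Lipschitz; so `‖B‖ ≤ ‖B‖_F ≤ ε √|D_edge|`.
The minimum-norm solution `E = (Xᵀ (X Xᵀ)⁻¹ B)ᵀ` has `‖E‖ ≤ ‖Xᵀ (X Xᵀ)⁻¹‖ ‖B‖ ≤ ‖B‖ / ρ`,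
by `‖Xᵀ w‖² = ⟪w, X Xᵀ w⟫ ≤ ‖w‖ ‖X Xᵀ w‖ ≤ ‖Xᵀ w‖ ‖X Xᵀ w‖ / ρ`.
-/

open Matrix

/-- The ReLU function `σ(t) = max(t, 0)`. -/
def relu (t : ℝ) : ℝ := max t 0

/-- Layer activations of a ReLU network with layer dimensions `d` and weight
matrices `W` (the `(l+1)`-st layer has matrix `W l : ℝ^{d (l+1) × d l}`):
`x^{(0)} = x` and `x^{(l+1)} = σ(W_{l+1} x^{(l)})` componentwise. The output of
the `L`-layer network is `layerAct d W L x`. -/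
def layerAct (d : ℕ → ℕ) (W : ∀ l : ℕ, Matrix (Fin (d (l + 1))) (Fin (d l)) ℝ) :
    (l : ℕ) → (Fin (d 0) → ℝ) → (Fin (d l) → ℝ)
  | 0, x => x
  | l + 1, x => fun i => relu (((W l).mulVec (layerAct d W l x)) i)

/-- The Euclidean norm of a real vector. -/
noncomputable def euclNorm {ι : Type*} [Fintype ι] (v : ι → ℝ) : ℝ :=
  Real.sqrt (∑ i, (v i) ^ 2)

/-- The operator norm of a real matrix with respect to Euclidean norms. -/
noncomputable def matOpNorm {m n : Type*} [Fintype m] [Fintype n] [DecidableEq n]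
    (M : Matrix m n ℝ) : ℝ :=
  ‖LinearMap.toContinuousLinearMap (Matrix.toEuclideanLin M)‖

open scoped Matrix.Norms.L2Operator

section EuclideanNorm

variable {ι κ μ : Type*} [Fintype ι] [Fintype κ] [Fintype μ]

lemma euclNorm_eq_norm (v : ι → ℝ) : euclNorm v = ‖WithLp.toLp 2 v‖ := by
  simp [euclNorm, EuclideanSpace.norm_eq, sq_abs]

lemma euclNorm_nonneg (v : ι → ℝ) : 0 ≤ euclNorm v := Real.sqrt_nonneg _

@[simp]
lemma euclNorm_zero : euclNorm (0 : ι → ℝ) = 0 := by simp [euclNorm]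

@[simp]
lemma euclNorm_neg (v : ι → ℝ) : euclNorm (-v) = euclNorm v := by simp [euclNorm]

lemma sq_euclNorm (v : ι → ℝ) : euclNorm v ^ 2 = v ⬝ᵥ v := by
  rw [euclNorm, Real.sq_sqrt (by positivity)]
  simp [dotProduct, pow_two]

lemma abs_dotProduct_le_euclNorm_mul (v w : ι → ℝ) : |v ⬝ᵥ w| ≤ euclNorm v * euclNorm w := by
  rw [euclNorm_eq_norm, euclNorm_eq_norm]
  simpa [PiLp.inner_apply, dotProduct, mul_comm] using
    abs_real_inner_le_norm (WithLp.toLp 2 v) (WithLp.toLp 2 w)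

lemma euclNorm_le_euclNorm_of_abs_le {v w : ι → ℝ} (h : ∀ i, |v i| ≤ |w i|) :
    euclNorm v ≤ euclNorm w :=
  Real.sqrt_le_sqrt <| Finset.sum_le_sum fun i _ => sq_le_sq.2 (h i)

variable [DecidableEq ι]

lemma euclNorm_mulVec_le (A : Matrix κ ι ℝ) (v : ι → ℝ) :
    euclNorm (A *ᵥ v) ≤ matOpNorm A * euclNorm v := by
  rw [euclNorm_eq_norm, euclNorm_eq_norm]
  exact A.l2_opNorm_mulVec (WithLp.toLp 2 v)

lemma matOpNorm_le_of_euclNorm_mulVec_le (A : Matrix κ ι ℝ) {c : ℝ} (hc : 0 ≤ c)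
    (h : ∀ v, euclNorm (A *ᵥ v) ≤ c * euclNorm v) : matOpNorm A ≤ c :=
  ContinuousLinearMap.opNorm_le_bound _ hc fun x => by
    simpa [euclNorm_eq_norm, Matrix.toLpLin_apply] using h x.ofLp

lemma matOpNorm_transpose [DecidableEq κ] (A : Matrix κ ι ℝ) : matOpNorm Aᵀ = matOpNorm A :=
  Matrix.l2_opNorm_conjTranspose A

lemma matOpNorm_mul_le [DecidableEq μ] (A : Matrix κ ι ℝ) (B : Matrix ι μ ℝ) :
    matOpNorm (A * B) ≤ matOpNorm A * matOpNorm B :=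
  Matrix.l2_opNorm_mul A B

lemma matOpNorm_le_sqrt_sum_sq_euclNorm_row (B : Matrix κ ι ℝ) :
    matOpNorm B ≤ √(∑ p, euclNorm (B p) ^ 2) := by
  refine matOpNorm_le_of_euclNorm_mulVec_le B (Real.sqrt_nonneg _) fun v => ?_
  calc euclNorm (B *ᵥ v) = √(∑ p, (B p ⬝ᵥ v) ^ 2) := rfl
    _ ≤ √(∑ p, (euclNorm (B p) * euclNorm v) ^ 2) :=
        Real.sqrt_le_sqrt <| Finset.sum_le_sum fun p _ => by
          rw [← sq_abs]
          exact pow_le_pow_left₀ (abs_nonneg _) (abs_dotProduct_le_euclNorm_mul _ _) 2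
    _ = √(∑ p, euclNorm (B p) ^ 2) * euclNorm v := by
        simp_rw [mul_pow, ← Finset.sum_mul]
        rw [Real.sqrt_mul (Finset.sum_nonneg fun p _ => sq_nonneg _),
          Real.sqrt_sq (euclNorm_nonneg v)]

lemma matOpNorm_le_mul_sqrt_card (B : Matrix κ ι ℝ) (s : Finset κ) {r : ℝ}
    (hzero : ∀ p ∉ s, B p = 0) (hs : ∀ p ∈ s, euclNorm (B p) ≤ r) :
    matOpNorm B ≤ r * √s.card := by
  have hr : 0 ≤ r * √s.card := by
    rcases s.eq_empty_or_nonempty with rfl | ⟨p, hp⟩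
    · simp
    · exact mul_nonneg ((euclNorm_nonneg _).trans (hs p hp)) (Real.sqrt_nonneg _)
  refine (matOpNorm_le_sqrt_sum_sq_euclNorm_row B).trans ((Real.sqrt_le_left hr).2 ?_)
  calc ∑ p, euclNorm (B p) ^ 2 = ∑ p ∈ s, euclNorm (B p) ^ 2 :=
        (Finset.sum_subset s.subset_univ fun p _ hp => by simp [hzero p hp]).symm
    _ ≤ ∑ p ∈ s, r ^ 2 :=
        Finset.sum_le_sum fun p hp => pow_le_pow_left₀ (euclNorm_nonneg _) (hs p hp) 2
    _ = (r * √s.card) ^ 2 := by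
        rw [Finset.sum_const, nsmul_eq_mul, mul_pow, Real.sq_sqrt (Nat.cast_nonneg _), mul_comm]

end EuclideanNorm

section MinimumNormSolution

variable {S n m : Type*} [Fintype S] [Fintype n] [Fintype m] [DecidableEq S]

lemma matOpNorm_transpose_mul_inv_le (X : Matrix S n ℝ) (hX : IsUnit (X * Xᵀ)) {ρ : ℝ}
    (hρ : 0 < ρ) (hσ : ∀ u : S → ℝ, ρ * euclNorm u ≤ euclNorm (Xᵀ *ᵥ u)) :
    matOpNorm (Xᵀ * (X * Xᵀ)⁻¹) ≤ ρ⁻¹ := by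
  refine matOpNorm_le_of_euclNorm_mulVec_le _ (inv_nonneg.2 hρ.le) fun z => ?_
  rw [← Matrix.mulVec_mulVec]
  set w := (X * Xᵀ)⁻¹ *ᵥ z
  set t := euclNorm (Xᵀ *ᵥ w)
  have hXw : X *ᵥ (Xᵀ *ᵥ w) = z := by
    rw [Matrix.mulVec_mulVec, Matrix.mulVec_mulVec,
      Matrix.mul_nonsing_inv _ ((Matrix.isUnit_iff_isUnit_det _).1 hX), Matrix.one_mulVec]
  have ht : t ^ 2 ≤ euclNorm w * euclNorm z := by
    calc t ^ 2 = w ⬝ᵥ z := by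
          rw [sq_euclNorm]
          nth_rw 1 [Matrix.mulVec_transpose]
          rw [← Matrix.dotProduct_mulVec, hXw]
      _ ≤ euclNorm w * euclNorm z := (le_abs_self _).trans (abs_dotProduct_le_euclNorm_mul w z)
  have hρt : ρ * t ^ 2 ≤ t * euclNorm z := by
    calc ρ * t ^ 2 ≤ ρ * euclNorm w * euclNorm z := by
          rw [mul_assoc]; exact mul_le_mul_of_nonneg_left ht hρ.le
      _ ≤ t * euclNorm z := mul_le_mul_of_nonneg_right (hσ w) (euclNorm_nonneg z)
  rw [inv_mul_eq_div, le_div_iff₀ hρ]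
  nlinarith [mul_le_mul_of_nonneg_left hρt hρ.le, euclNorm_nonneg z]

lemma exists_mulVec_row_eq_and_matOpNorm_le [DecidableEq n] [DecidableEq m]
    (X : Matrix S n ℝ) (hX : IsUnit (X * Xᵀ)) {ρ : ℝ} (hρ : 0 < ρ)
    (hσ : ∀ u : S → ℝ, ρ * euclNorm u ≤ euclNorm (Xᵀ *ᵥ u)) (B : Matrix S m ℝ) :
    ∃ E : Matrix m n ℝ, (∀ p, E *ᵥ X p = B p) ∧ matOpNorm E ≤ matOpNorm B / ρ := by
  refine ⟨(Xᵀ * (X * Xᵀ)⁻¹ * B)ᵀ, fun p => ?_, ?_⟩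
  · have hXE : X * (Xᵀ * (X * Xᵀ)⁻¹ * B) = B := by
      rw [← Matrix.mul_assoc, ← Matrix.mul_assoc,
        Matrix.mul_nonsing_inv _ ((Matrix.isUnit_iff_isUnit_det _).1 hX), Matrix.one_mul]
    rw [Matrix.mulVec_transpose]
    exact congrFun hXE p
  · rw [matOpNorm_transpose, div_eq_inv_mul]
    exact (matOpNorm_mul_le _ _).trans <| mul_le_mul_of_nonneg_right
      (matOpNorm_transpose_mul_inv_le X hX hρ hσ) (ContinuousLinearMap.opNorm_nonneg _)

end MinimumNormSolution

section ReLUNetwork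

variable {d : ℕ → ℕ} {W : ∀ l : ℕ, Matrix (Fin (d (l + 1))) (Fin (d l)) ℝ}

lemma layerAct_succ (l : ℕ) (x : Fin (d 0) → ℝ) :
    layerAct d W (l + 1) x = fun i => relu ((W l *ᵥ layerAct d W l x) i) := rfl

lemma euclNorm_layerAct_sub_le {l : ℕ} (hW : ∀ j < l, matOpNorm (W j) ≤ 1)
    (x y : Fin (d 0) → ℝ) :
    euclNorm (layerAct d W l x - layerAct d W l y) ≤ euclNorm (x - y) := by
  induction l with
  | zero => rfl
  | succ l ih =>
    calc euclNorm (layerAct d W (l + 1) x - layerAct d W (l + 1) y)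
        ≤ euclNorm (W l *ᵥ (layerAct d W l x - layerAct d W l y)) :=
          euclNorm_le_euclNorm_of_abs_le fun i => by
            rw [Matrix.mulVec_sub]
            exact abs_max_sub_max_le_abs _ _ 0
      _ ≤ matOpNorm (W l) * euclNorm (layerAct d W l x - layerAct d W l y) :=
          euclNorm_mulVec_le _ _
      _ ≤ euclNorm (x - y) :=
          (mul_le_of_le_one_left (euclNorm_nonneg _) (hW l l.lt_succ_self)).trans
            (ih fun j hj => hW j (hj.trans l.lt_succ_self))

lemma euclNorm_mulVec_layerAct_sub_le {l : ℕ} (hW : ∀ j ≤ l, matOpNorm (W j) ≤ 1)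
    (x y : Fin (d 0) → ℝ) :
    euclNorm (W l *ᵥ (layerAct d W l x - layerAct d W l y)) ≤ euclNorm (x - y) :=
  (euclNorm_mulVec_le _ _).trans <|
    (mul_le_of_le_one_left (euclNorm_nonneg _) (hW l le_rfl)).trans
      (euclNorm_layerAct_sub_le (fun j hj => hW j hj.le) x y)

variable {k : ℕ} {M : Matrix (Fin (d (k + 1))) (Fin (d k)) ℝ}

lemma layerAct_update_of_le {l : ℕ} (hl : l ≤ k) :
    layerAct d (Function.update W k M) l = layerAct d W l := by
  induction l with
  | zero => rfl
  | succ l ih =>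
    funext x
    rw [layerAct_succ, layerAct_succ, Function.update_of_ne (by omega), ih (by omega)]

lemma layerAct_update_succ (x : Fin (d 0) → ℝ) :
    layerAct d (Function.update W k M) (k + 1) x =
      fun i => relu ((M *ᵥ layerAct d W k x) i) := by
  rw [layerAct_succ, Function.update_self, layerAct_update_of_le le_rfl]

lemma layerAct_update_eq_of_succ_eq {x y : Fin (d 0) → ℝ}
    (h : layerAct d (Function.update W k M) (k + 1) x = layerAct d W (k + 1) y)
    {l : ℕ} (hl : k + 1 ≤ l) :
    layerAct d (Function.update W k M) l x = layerAct d W l y := by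
  induction l, hl using Nat.le_induction with
  | base => exact h
  | succ l hl ih =>
    rw [layerAct_succ, layerAct_succ, Function.update_of_ne (by omega), ih]

end ReLUNetwork

theorem adversarial_examples_imply_backdoors_general
    (L : ℕ) (d : ℕ → ℕ)
    (W : ∀ l : ℕ, Matrix (Fin (d (l + 1))) (Fin (d l)) ℝ)
    (hW : ∀ l, l < L → matOpNorm (W l) ≤ 1)
    [DecidableEq (Fin (d 0) → ℝ)]
    (D Dedge : Finset (Fin (d 0) → ℝ)) (hdisj : Disjoint D Dedge)
    (ε : ℝ) (εf : (Fin (d 0) → ℝ) → (Fin (d 0) → ℝ))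
    (hε : ∀ x ∈ Dedge, euclNorm (εf x) ≤ ε)
    (k : ℕ) (hk : k + 1 ≤ L)
    (Xl : Matrix (↥(D ∪ Dedge)) (Fin (d k)) ℝ)
    (hXl : ∀ p : ↥(D ∪ Dedge), Xl p = layerAct d W k p.1)
    (hinv : IsUnit (Xl * Xlᵀ))
    (ρ : ℝ) (hρ : 0 < ρ)
    (hσ : ∀ u : ↥(D ∪ Dedge) → ℝ, ρ * euclNorm u ≤ euclNorm (Xlᵀ.mulVec u)) :
    ∃ M : Matrix (Fin (d (k + 1))) (Fin (d k)) ℝ,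
      (∀ x ∈ D, layerAct d (Function.update W k M) L x = layerAct d W L x) ∧
      (∀ x ∈ Dedge,
        layerAct d (Function.update W k M) L x = layerAct d W L (x + εf x)) ∧
      matOpNorm (W k - M) ≤ ε * Real.sqrt (Dedge.card) / ρ := by
  let tgt : ↥(D ∪ Dedge) → (Fin (d 0) → ℝ) := fun p =>
    if p.1 ∈ Dedge then p.1 + εf p.1 else p.1
  let B : Matrix ↥(D ∪ Dedge) (Fin (d (k + 1))) ℝ :=
    fun p => W k *ᵥ (layerAct d W k p - layerAct d W k (tgt p))
  obtain ⟨E, hE, hEB⟩ := exists_mulVec_row_eq_and_matOpNorm_le Xl hinv hρ hσ B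
  have hfit : ∀ p : ↥(D ∪ Dedge), layerAct d (Function.update W k (W k - E)) (k + 1) p =
      layerAct d W (k + 1) (tgt p) := by
    intro p
    rw [layerAct_update_succ, layerAct_succ, Matrix.sub_mulVec, ← hXl, hE, hXl]
    simp [B, Matrix.mulVec_sub]
  have hB : matOpNorm B ≤ ε * √Dedge.card := by
    have h := matOpNorm_le_mul_sqrt_card B (Dedge.subtype (· ∈ D ∪ Dedge))
      (fun p hp => by simp [B, tgt, Finset.mem_subtype.not.1 hp])
      (fun p hp => (euclNorm_mulVec_layerAct_sub_le (fun j hj => hW j (by omega)) _ _).trans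
        (by simpa [tgt, Finset.mem_subtype.1 hp] using hε p (Finset.mem_subtype.1 hp)))
    rwa [Finset.card_subtype, Finset.filter_true_of_mem fun x => Finset.mem_union_right D] at h
  refine ⟨W k - E, fun x hx => ?_, fun x hx => ?_, ?_⟩
  · simpa [tgt, Finset.disjoint_left.1 hdisj hx] using
      layerAct_update_eq_of_succ_eq (hfit ⟨x, Finset.mem_union_left _ hx⟩) hk
  · simpa [tgt, hx] using
      layerAct_update_eq_of_succ_eq (hfit ⟨x, Finset.mem_union_right _ hx⟩) hk
  · rw [sub_sub_cancel]
    exact hEB.trans (div_le_div_of_nonneg_right hB hρ.le)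

/-- **Theorem 1, upper bound: adversarial examples imply
backdoors.**  Let `f_W` be an `L`-layer ReLU network whose weight matrices all
have operator norm at most `1`.  Let `D`, `Dedge` be finite disjoint sets of
inputs and suppose `ε`-adversarial perturbations `εf x` (of norm at most `ε`)
exist for the points of `Dedge`.  Fix a layer `l = k + 1 ≤ L`, let `Xl` be the
matrix whose rows are the `(l−1)`-th layer activations of the points of
`D ∪ Dedge`, assume `Xl Xlᵀ` is invertible, and let `ρ > 0` be (a lower bound
on) the minimum singular value of `Xl`.  Then there is a matrix `M` such that
replacing the `l`-th layer of `W` with `M` yields a network that agrees with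
`f_W` on `D`, outputs `f_W(x + εf x)` on each `x ∈ Dedge`, and satisfies
`‖W_l − M‖ ≤ ε √|Dedge| / ρ` in operator norm. -/
theorem adversarial_examples_imply_backdoors
    (L : ℕ) (hL : 1 ≤ L) (d : ℕ → ℕ)
    (W : ∀ l : ℕ, Matrix (Fin (d (l + 1))) (Fin (d l)) ℝ)
    (hW : ∀ l, l < L → matOpNorm (W l) ≤ 1)
    [DecidableEq (Fin (d 0) → ℝ)]
    (D Dedge : Finset (Fin (d 0) → ℝ)) (hdisj : Disjoint D Dedge)
    (ε : ℝ) (εf : (Fin (d 0) → ℝ) → (Fin (d 0) → ℝ))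
    (hε : ∀ x ∈ Dedge, euclNorm (εf x) ≤ ε)
    (k : ℕ) (hk : k + 1 ≤ L)
    (Xl : Matrix (↥(D ∪ Dedge)) (Fin (d k)) ℝ)
    (hXl : ∀ p : ↥(D ∪ Dedge), Xl p = layerAct d W k p.1)
    (hinv : IsUnit (Xl * Xlᵀ))
    (ρ : ℝ) (hρ : 0 < ρ)
    (hσ : ∀ u : ↥(D ∪ Dedge) → ℝ, ρ * euclNorm u ≤ euclNorm (Xlᵀ.mulVec u)) :
    ∃ M : Matrix (Fin (d (k + 1))) (Fin (d k)) ℝ,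
      (∀ x ∈ D, layerAct d (Function.update W k M) L x = layerAct d W L x) ∧
      (∀ x ∈ Dedge,
        layerAct d (Function.update W k M) L x = layerAct d W L (x + εf x)) ∧
      matOpNorm (W k - M) ≤ ε * Real.sqrt (Dedge.card) / ρ :=
  adversarial_examples_imply_backdoors_general L d W hW D Dedge hdisj ε εf hε k hk Xl hXl hinv ρ hρ
    hσ
end

section
/- (Correctness of the 3-SAT-to-ReLU reduction.) Let φ be a 3-CNF formula with m clauses over n Boolean variables and let f_φ : ℝ^n → ℝ be the associated ReLU network. Then φ is satisfiable if and only if there exists x ∈ [0,1]^n with f_φ(x) > 0 (equivalently, f_φ is not identically zero on [0,1]^n; note f_φ(x) ≥ 0 for all x). -/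
/-- A literal over `n` Boolean variables: a variable index together with a
negation flag (`neg = true` means the literal is `¬ s_var`). -/
structure Literal (n : ℕ) where
  var : Fin n
  neg : Bool

/-- A 3-CNF formula with `m` clauses over `n` variables: each clause consists of
three literals. -/
def CNF3 (n m : ℕ) := Fin m → Fin 3 → Literal n

/-- A literal is satisfied by an assignment `s`. -/
def litSat {n : ℕ} (s : Fin n → Prop) (t : Literal n) : Prop :=
  if t.neg then ¬ s t.var else s t.var

/-- A clause (three literals) is satisfied by an assignment `s` if some literal
in it is satisfied. -/
def clauseSat {n : ℕ} (s : Fin n → Prop) (C : Fin 3 → Literal n) : Prop :=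
  ∃ j, litSat s (C j)

/-- The value `z_{i,j}(x)`: `σ(2 x_k − 1)` for the literal `s_k` and
`σ(1 − 2 x_k)` for the literal `¬ s_k`. -/
def zval {n : ℕ} (t : Literal n) (x : Fin n → ℝ) : ℝ :=
  if t.neg then relu (1 - 2 * x t.var) else relu (2 * x t.var - 1)

/-- The clause gadget
`f_i(x) = σ(z_{i,1} + z_{i,2} + z_{i,3}) − σ(z_{i,1} + z_{i,2} + z_{i,3} − 1)`. -/
noncomputable def clauseGadget {n : ℕ} (C : Fin 3 → Literal n) (x : Fin n → ℝ) : ℝ :=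
  relu (∑ j, zval (C j) x) - relu ((∑ j, zval (C j) x) - 1)

/-- The ReLU network associated to a 3-CNF formula:
`f_φ(x) = σ((Σ_{i=1}^m f_i(x)) − m + 1)`. -/
noncomputable def cnfNet {n m : ℕ} (φ : CNF3 n m) (x : Fin n → ℝ) : ℝ :=
  relu ((∑ i, clauseGadget (φ i) x) - m + 1)

/-!
The gadget `σ(S) − σ(S − 1)` clamps `S` to `[0, 1]`. At the 0/1-point of a satisfying
assignment every clause has some `z_{i,j} = 1`, so every clause gadget equals `1` and `f_φ = 1`.
Conversely, `f_φ(x) > 0` says that `m` clause gadgets, each at most `1`, sum to more than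
`m − 1`, so each is positive; hence every clause has some `z_{i,j}(x) > 0`, and that literal is
true under the rounding `s_k := (x_k > 1/2)`.
-/

open Finset

theorem pos_of_card_sub_one_lt_sum {ι : Type*} [Fintype ι] {a : ι → ℝ} (ha : ∀ i, a i ≤ 1)
    (hsum : (Fintype.card ι : ℝ) - 1 < ∑ i, a i) (i : ι) : 0 < a i := by
  have : 1 - a i ≤ ∑ j, (1 - a j) :=
    single_le_sum (f := fun j => 1 - a j) (fun j _ => sub_nonneg.2 (ha j)) (mem_univ i)
  rw [sum_sub_distrib, sum_const, card_univ, nsmul_one] at this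
  linarith

theorem relu_nonneg (t : ℝ) : 0 ≤ relu t := le_max_right t 0

theorem relu_pos_iff {t : ℝ} : 0 < relu t ↔ 0 < t := by simp [relu]

theorem relu_sub_relu_sub_one (S : ℝ) : relu S - relu (S - 1) = max 0 (min S 1) := by
  unfold relu
  rcases le_total S 0 with h | h
  · rw [max_eq_right h, max_eq_right (by linarith), min_eq_left (by linarith), max_eq_left h]
    ring
  rcases le_total S 1 with h' | h'
  · rw [max_eq_left h, max_eq_right (by linarith), min_eq_left h', max_eq_right h]
    ring
  · rw [max_eq_left h, max_eq_left (by linarith), min_eq_right h', max_eq_right zero_le_one]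
    ring

section Clause

variable {n : ℕ}

theorem zval_nonneg (t : Literal n) (x : Fin n → ℝ) : 0 ≤ zval t x := by
  unfold zval; split <;> exact relu_nonneg _

theorem litSat_of_zval_pos {t : Literal n} {x : Fin n → ℝ} (h : 0 < zval t x) :
    litSat (fun k => 1 / 2 < x k) t := by
  unfold zval at h
  unfold litSat
  split at h <;> rw [relu_pos_iff] at h <;> simp only [*, if_true, Bool.false_eq_true, if_false,
    not_lt] <;> linarith

theorem zval_indicator_of_litSat {s : Fin n → Prop} {t : Literal n} (h : litSat s t) :
    zval t ({k | s k}.indicator 1) = 1 := by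
  unfold litSat at h
  unfold zval
  split at h <;> norm_num [*, relu]

theorem clauseGadget_eq_clamp (C : Fin 3 → Literal n) (x : Fin n → ℝ) :
    clauseGadget C x = max 0 (min (∑ j, zval (C j) x) 1) :=
  relu_sub_relu_sub_one _

theorem clauseGadget_le_one (C : Fin 3 → Literal n) (x : Fin n → ℝ) : clauseGadget C x ≤ 1 := by
  rw [clauseGadget_eq_clamp]
  exact max_le zero_le_one (min_le_right _ _)

theorem clauseSat_of_clauseGadget_pos {C : Fin 3 → Literal n} {x : Fin n → ℝ}
    (h : 0 < clauseGadget C x) : clauseSat (fun k => 1 / 2 < x k) C := by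
  rw [clauseGadget_eq_clamp, lt_max_iff, lt_min_iff] at h
  have hsum : ∑ _j : Fin 3, (0 : ℝ) < ∑ j, zval (C j) x := by simpa using h
  obtain ⟨j, -, hj⟩ := exists_lt_of_sum_lt hsum
  exact ⟨j, litSat_of_zval_pos hj⟩

theorem clauseGadget_indicator_of_clauseSat {s : Fin n → Prop} {C : Fin 3 → Literal n}
    (h : clauseSat s C) : clauseGadget C ({k | s k}.indicator 1) = 1 := by
  obtain ⟨j, hj⟩ := h
  have : 1 ≤ ∑ j, zval (C j) ({k | s k}.indicator 1) :=
    zval_indicator_of_litSat hj ▸ single_le_sum (fun j _ => zval_nonneg _ _) (mem_univ j)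
  rw [clauseGadget_eq_clamp, min_eq_right this, max_eq_right zero_le_one]

end Clause

theorem cnfNet_pos_iff {n m : ℕ} (φ : CNF3 n m) (x : Fin n → ℝ) :
    0 < cnfNet φ x ↔ (m : ℝ) - 1 < ∑ i, clauseGadget (φ i) x := by
  rw [cnfNet, relu_pos_iff]
  constructor <;> intro h <;> linarith

/-- **correctness of the 3-SAT-to-ReLU reduction.**  A 3-CNF
formula `φ` is satisfiable if and only if its associated ReLU network `f_φ` is
positive at some point of `[0,1]^n` (equivalently, `f_φ` is not identically
zero on `[0,1]^n`, since `f_φ ≥ 0`). -/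
theorem cnf_satisfiable_iff_net_positive {n m : ℕ} (φ : CNF3 n m) :
    (∃ s : Fin n → Prop, ∀ i, clauseSat s (φ i)) ↔
      ∃ x : Fin n → ℝ, (∀ k, x k ∈ Set.Icc (0 : ℝ) 1) ∧ 0 < cnfNet φ x := by
  constructor
  · rintro ⟨s, hs⟩
    refine ⟨{k | s k}.indicator 1, fun k => ?_, ?_⟩
    · by_cases hk : s k <;> simp [Set.indicator, hk]
    · simp [cnfNet_pos_iff, clauseGadget_indicator_of_clauseSat (hs _)]
  · rintro ⟨x, -, hx⟩
    rw [cnfNet_pos_iff] at hx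
    refine ⟨fun k => 1 / 2 < x k, fun i => clauseSat_of_clauseGadget_pos ?_⟩
    exact pos_of_card_sub_one_lt_sum (fun i => clauseGadget_le_one _ _)
      (by simpa using hx) i
end

section
/- (Clause gadget correctness.) Let φ be a 3-CNF formula and f_i the gadget for clause C_i. For every x ∈ {0,1}^n, with the Boolean assignment s_k := (x_k = 1): f_i(x) = 1 if the clause C_i is satisfied by s, and f_i(x) = 0 otherwise; in particular f_i(x) ∈ {0,1} for Boolean x. -/
lemma zval_cases {n : ℕ} (t : Literal n) (x : Fin n → ℝ)
    (hx : x t.var = 0 ∨ x t.var = 1) :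
    (litSat (fun k => x k = 1) t ∧ zval t x = 1) ∨
      (¬ litSat (fun k => x k = 1) t ∧ zval t x = 0) := by
  unfold litSat zval relu
  rcases hx with h | h <;> cases t.neg <;> simp [h] <;> norm_num

/-- **clause gadget correctness.**  For Boolean `x ∈ {0,1}^n`,
with the associated assignment `s_k := (x_k = 1)`: the clause gadget equals `1`
if the clause is satisfied by `s`, equals `0` otherwise; in particular its value
lies in `{0, 1}`. -/
theorem clause_gadget_correct {n : ℕ} (C : Fin 3 → Literal n)
    (x : Fin n → ℝ) (hx01 : ∀ k, x k = 0 ∨ x k = 1) :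
    (clauseSat (fun k => x k = 1) C → clauseGadget C x = 1) ∧
      (¬ clauseSat (fun k => x k = 1) C → clauseGadget C x = 0) ∧
      (clauseGadget C x = 0 ∨ clauseGadget C x = 1) := by
  have h0 := zval_cases (C 0) x (hx01 _)
  have h1 := zval_cases (C 1) x (hx01 _)
  have h2 := zval_cases (C 2) x (hx01 _)
  have hsum : clauseGadget C x =
      relu (zval (C 0) x + zval (C 1) x + zval (C 2) x) -
        relu (zval (C 0) x + zval (C 1) x + zval (C 2) x - 1) := by
    simp [clauseGadget, Fin.sum_univ_three]
  have hsat : clauseSat (fun k => x k = 1) C ↔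
      litSat (fun k => x k = 1) (C 0) ∨ litSat (fun k => x k = 1) (C 1) ∨
        litSat (fun k => x k = 1) (C 2) := by
    constructor
    · rintro ⟨j, hj⟩; fin_cases j <;> tauto
    · rintro (h | h | h) <;> exact ⟨_, h⟩
  rcases h0 with ⟨s0, e0⟩ | ⟨s0, e0⟩ <;> rcases h1 with ⟨s1, e1⟩ | ⟨s1, e1⟩ <;>
    rcases h2 with ⟨s2, e2⟩ | ⟨s2, e2⟩ <;>
    rw [hsum, e0, e1, e2] <;> unfold relu <;> norm_num <;> tauto
end
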